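/- arXiv:1009.0235 — 2 statements merged into one kernel-verified Lean document; each statement's English description precedes it below -/
import Mathlib

section
/- Let B be a one-dimensional N-parameter Brownian sheet and I ⊂ (0,∞)^N a nonrandom upright box. Then there exists a finite constant c > 1 such that uniformly for all s, u, v ∈ I: c^{−1} ‖u − v‖ ≤ Var(B_s(u) − B_s(v)) ≤ c ‖u − v‖, where B_s(t) = B(t) − δ_s(t) B(s) is the pinned sheet. -/
open Finset MeasureTheory ProbabilityTheory

section Aux

lemma min_diff_mono' {c c' w w' : ℝ} (hc : c ≤ c') (hw : w ≤ w') :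
    min c w' - min c w ≤ min c' w' - min c' w := by
  rcases le_total c w with h | h <;> rcases le_total c w' with h2 | h2 <;>
    rcases le_total c' w with h3 | h3 <;> rcases le_total c' w' with h4 | h4 <;>
    simp [min_eq_left, min_eq_right, *] <;> linarith

lemma prod_incl_excl' {ι : Type*} (s : Finset ι) (α β γ : ι → ℝ)
    (hα0 : ∀ i, 0 ≤ α i) (hβ0 : ∀ i, 0 ≤ β i)
    (hαγ : ∀ i, α i ≤ γ i) (hβγ : ∀ i, β i ≤ γ i) :
    ∏ i ∈ s, α i + ∏ i ∈ s, β i - ∏ i ∈ s, min (α i) (β i) ≤ ∏ i ∈ s, γ i := by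
  classical
  induction s using Finset.induction_on with
  | empty => simp
  | @insert a s ha ih =>
    rw [prod_insert ha, prod_insert ha, prod_insert ha, prod_insert ha]
    have hA : (0:ℝ) ≤ ∏ i ∈ s, α i := prod_nonneg fun i _ => hα0 i
    have hB : (0:ℝ) ≤ ∏ i ∈ s, β i := prod_nonneg fun i _ => hβ0 i
    have hP : (0:ℝ) ≤ ∏ i ∈ s, min (α i) (β i) :=
      prod_nonneg fun i _ => le_min (hα0 i) (hβ0 i)
    have hPA : ∏ i ∈ s, min (α i) (β i) ≤ ∏ i ∈ s, α i :=
      prod_le_prod (fun i _ => le_min (hα0 i) (hβ0 i)) (fun i _ => min_le_left _ _)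
    have hPB : ∏ i ∈ s, min (α i) (β i) ≤ ∏ i ∈ s, β i :=
      prod_le_prod (fun i _ => le_min (hα0 i) (hβ0 i)) (fun i _ => min_le_right _ _)
    have hγa : 0 ≤ γ a := le_trans (hα0 a) (hαγ a)
    have key : α a * ∏ i ∈ s, α i + β a * ∏ i ∈ s, β i
        - min (α a) (β a) * ∏ i ∈ s, min (α i) (β i)
        ≤ γ a * (∏ i ∈ s, α i + ∏ i ∈ s, β i - ∏ i ∈ s, min (α i) (β i)) := by
      rcases le_total (α a) (β a) with h | h
      · rw [min_eq_left h]
        nlinarith [hαγ a, hβγ a, hα0 a, hβ0 a]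
      · rw [min_eq_right h]
        nlinarith [hαγ a, hβγ a, hα0 a, hβ0 a]
    calc α a * ∏ i ∈ s, α i + β a * ∏ i ∈ s, β i
        - min (α a) (β a) * ∏ i ∈ s, min (α i) (β i)
        ≤ γ a * (∏ i ∈ s, α i + ∏ i ∈ s, β i - ∏ i ∈ s, min (α i) (β i)) := key
      _ ≤ γ a * ∏ i ∈ s, γ i := by
          apply mul_le_mul_of_nonneg_left (ih) hγa

lemma symmdiff_mono' {ι : Type*} (s : Finset ι) (x y w w' : ι → ℝ)
    (hx : ∀ i, 0 ≤ x i) (hy : ∀ i, 0 ≤ y i) (hw : ∀ i, 0 ≤ w i)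
    (hww : ∀ i, w i ≤ w' i) :
    ∀ c₁ c₂ c₃ : ℝ, 0 ≤ c₃ → c₃ ≤ c₁ → c₃ ≤ c₂ →
    c₁ * ∏ i ∈ s, min (x i) (w i) + c₂ * ∏ i ∈ s, min (y i) (w i)
      - 2 * c₃ * ∏ i ∈ s, min (min (x i) (y i)) (w i)
    ≤ c₁ * ∏ i ∈ s, min (x i) (w' i) + c₂ * ∏ i ∈ s, min (y i) (w' i)
      - 2 * c₃ * ∏ i ∈ s, min (min (x i) (y i)) (w' i) := by
  classical
  induction s using Finset.induction_on with
  | empty => intro c₁ c₂ c₃ h0 h1 h2; simp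
  | @insert a s ha ih =>
    intro c₁ c₂ c₃ h0 h1 h2
    rw [prod_insert ha, prod_insert ha, prod_insert ha, prod_insert ha, prod_insert ha,
      prod_insert ha]
    set X := ∏ i ∈ s, min (x i) (w i) with hX
    set Y := ∏ i ∈ s, min (y i) (w i) with hY
    set P := ∏ i ∈ s, min (min (x i) (y i)) (w i) with hP
    have hXpos : 0 ≤ X := prod_nonneg fun i _ => le_min (hx i) (hw i)
    have hYpos : 0 ≤ Y := prod_nonneg fun i _ => le_min (hy i) (hw i)
    have hPpos : 0 ≤ P := prod_nonneg fun i _ => le_min (le_min (hx i) (hy i)) (hw i)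
    have hPX : P ≤ X := prod_le_prod (fun i _ => le_min (le_min (hx i) (hy i)) (hw i))
      (fun i _ => min_le_min (min_le_left _ _) le_rfl)
    have hPY : P ≤ Y := prod_le_prod (fun i _ => le_min (le_min (hx i) (hy i)) (hw i))
      (fun i _ => min_le_min (min_le_right _ _) le_rfl)
    have hdx : min (x a) (w a) ≤ min (x a) (w' a) := min_le_min le_rfl (hww a)
    have hdy : min (y a) (w a) ≤ min (y a) (w' a) := min_le_min le_rfl (hww a)
    have hdt1 : min (min (x a) (y a)) (w' a) - min (min (x a) (y a)) (w a)
        ≤ min (x a) (w' a) - min (x a) (w a) :=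
      min_diff_mono' (min_le_left _ _) (hww a)
    have hdt2 : min (min (x a) (y a)) (w' a) - min (min (x a) (y a)) (w a)
        ≤ min (y a) (w' a) - min (y a) (w a) :=
      min_diff_mono' (min_le_right _ _) (hww a)
    have hdt0 : min (min (x a) (y a)) (w a) ≤ min (min (x a) (y a)) (w' a) :=
      min_le_min le_rfl (hww a)
    have step1 : c₁ * (min (x a) (w a) * X) + c₂ * (min (y a) (w a) * Y)
        - 2 * c₃ * (min (min (x a) (y a)) (w a) * P)
        ≤ c₁ * (min (x a) (w' a) * X) + c₂ * (min (y a) (w' a) * Y)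
        - 2 * c₃ * (min (min (x a) (y a)) (w' a) * P) := by
      have e1 : c₃ * ((min (min (x a) (y a)) (w' a) - min (min (x a) (y a)) (w a)) * P)
          ≤ c₁ * ((min (x a) (w' a) - min (x a) (w a)) * X) := by
        apply mul_le_mul h1 _ (mul_nonneg (by linarith) hPpos) (le_trans h0 h1)
        apply mul_le_mul hdt1 hPX hPpos (by linarith)
      have e2 : c₃ * ((min (min (x a) (y a)) (w' a) - min (min (x a) (y a)) (w a)) * P)
          ≤ c₂ * ((min (y a) (w' a) - min (y a) (w a)) * Y) := by
        apply mul_le_mul h2 _ (mul_nonneg (by linarith) hPpos) (le_trans h0 h2)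
        apply mul_le_mul hdt2 hPY hPpos (by linarith)
      nlinarith [e1, e2]
    have hma : 0 ≤ min (min (x a) (y a)) (w' a) := le_min (le_min (hx a) (hy a))
      (le_trans (hw a) (hww a))
    have step2 := ih (c₁ * min (x a) (w' a)) (c₂ * min (y a) (w' a))
      (c₃ * min (min (x a) (y a)) (w' a))
      (mul_nonneg h0 hma)
      (mul_le_mul h1 (min_le_min (min_le_left _ _) le_rfl) hma (le_trans h0 h1))
      (mul_le_mul h2 (min_le_min (min_le_right _ _) le_rfl) hma (le_trans h0 h2))
    calc c₁ * (min (x a) (w a) * X) + c₂ * (min (y a) (w a) * Y)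
          - 2 * c₃ * (min (min (x a) (y a)) (w a) * P)
        ≤ c₁ * (min (x a) (w' a) * X) + c₂ * (min (y a) (w' a) * Y)
          - 2 * c₃ * (min (min (x a) (y a)) (w' a) * P) := step1
      _ ≤ _ := by
          have := step2
          ring_nf at this ⊢
          linarith

lemma prod_sub_prod_le' {ι : Type*} [DecidableEq ι] (s : Finset ι) (f g : ι → ℝ)
    (hg : ∀ i, 0 ≤ g i) (hgf : ∀ i, g i ≤ f i) :
    ∏ i ∈ s, f i - ∏ i ∈ s, g i ≤ ∑ j ∈ s, (f j - g j) * ∏ i ∈ s.erase j, f i := by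
  induction s using Finset.induction_on with
  | empty => simp
  | @insert a s ha ih =>
    rw [prod_insert ha, prod_insert ha, sum_insert ha]
    have hf0 : ∀ i, 0 ≤ f i := fun i => le_trans (hg i) (hgf i)
    have hG : (0:ℝ) ≤ ∏ i ∈ s, g i := prod_nonneg fun i _ => hg i
    have hGF : ∏ i ∈ s, g i ≤ ∏ i ∈ s, f i := prod_le_prod (fun i _ => hg i) (fun i _ => hgf i)
    have e1 : (insert a s).erase a = s := erase_insert ha
    have e2 : ∀ j ∈ s, (insert a s).erase j = insert a (s.erase j) := by
      intro j hj
      rw [erase_insert_of_ne]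
      intro h; exact ha (h ▸ hj)
    rw [e1]
    have : ∑ j ∈ s, (f j - g j) * ∏ i ∈ (insert a s).erase j, f i
        = f a * ∑ j ∈ s, (f j - g j) * ∏ i ∈ s.erase j, f i := by
      rw [mul_sum]
      apply sum_congr rfl
      intro j hj
      rw [e2 j hj, prod_insert (fun h => ha (mem_of_mem_erase h))]
      ring
    rw [this]
    have hfa : 0 ≤ f a := hf0 a
    nlinarith [ih, hgf a, hg a, prod_nonneg (fun i (_ : i ∈ s) => hf0 i)]

lemma sum_le_prod_sub_prod' {ι : Type*} [DecidableEq ι] (s : Finset ι) (f g : ι → ℝ)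
    (hg : ∀ i, 0 ≤ g i) (hgf : ∀ i, g i ≤ f i) :
    ∑ j ∈ s, (f j - g j) * ∏ i ∈ s.erase j, g i ≤ ∏ i ∈ s, f i - ∏ i ∈ s, g i := by
  induction s using Finset.induction_on with
  | empty => simp
  | @insert a s ha ih =>
    rw [prod_insert ha, prod_insert ha, sum_insert ha]
    have hf0 : ∀ i, 0 ≤ f i := fun i => le_trans (hg i) (hgf i)
    have hG : (0:ℝ) ≤ ∏ i ∈ s, g i := prod_nonneg fun i _ => hg i
    have hGF : ∏ i ∈ s, g i ≤ ∏ i ∈ s, f i := prod_le_prod (fun i _ => hg i) (fun i _ => hgf i)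
    have e1 : (insert a s).erase a = s := erase_insert ha
    have e2 : ∀ j ∈ s, (insert a s).erase j = insert a (s.erase j) := by
      intro j hj
      rw [erase_insert_of_ne]
      intro h; exact ha (h ▸ hj)
    rw [e1]
    have : ∑ j ∈ s, (f j - g j) * ∏ i ∈ (insert a s).erase j, g i
        = g a * ∑ j ∈ s, (f j - g j) * ∏ i ∈ s.erase j, g i := by
      rw [mul_sum]
      apply sum_congr rfl
      intro j hj
      rw [e2 j hj, prod_insert (fun h => ha (mem_of_mem_erase h))]
      ring
    rw [this]
    nlinarith [ih, hgf a, hg a]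

lemma abs_sub_eq_add_sub_min (x y : ℝ) : |x - y| = (x - min x y) + (y - min x y) := by
  rcases le_total x y with h | h
  · rw [min_eq_left h, abs_of_nonpos (by linarith)]; ring
  · rw [min_eq_right h, abs_of_nonneg (by linarith)]; ring

open Real in
lemma evariance_map'' {Ω : Type*} [MeasurableSpace Ω] (μ : Measure Ω) (X : Ω → ℝ)
    (hX : Measurable X) :
    evariance X μ = evariance id (Measure.map X μ) := by
  have hint : (Measure.map X μ)[id] = μ[X] :=
    integral_map hX.aemeasurable aestronglyMeasurable_id
  rw [evariance, evariance, hint]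
  rw [lintegral_map _ hX]
  · rfl
  · exact (measurable_id.sub measurable_const).nnnorm.coe_nnreal_ennreal.pow_const 2

open Real in
lemma integrable_sq_gaussianPDFReal' (m : ℝ) (v : NNReal) (hv : v ≠ 0) :
    Integrable (fun x : ℝ => x ^ 2 * gaussianPDFReal m v x) := by
  have hvpos : (0:ℝ) < v := lt_of_le_of_ne v.2 (by exact_mod_cast (Ne.symm hv))
  have hb : (0:ℝ) < (2 * (v:ℝ))⁻¹ := by positivity
  set b : ℝ := (2 * (v:ℝ))⁻¹ with hbdef
  set c : ℝ := (Real.sqrt (2 * π * v))⁻¹ with hcdef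
  have key : Integrable (fun y : ℝ => ((y + m) ^ 2 * c) * Real.exp (-b * y ^ 2)) := by
    have h2 : Integrable (fun y : ℝ => y ^ (2:ℝ) * Real.exp (-b * y ^ 2)) :=
      integrable_rpow_mul_exp_neg_mul_sq hb (by norm_num)
    have h2' : Integrable (fun y : ℝ => y ^ 2 * Real.exp (-b * y ^ 2)) := by
      convert h2 using 2 with y
      rw [← Real.rpow_natCast y 2]
      norm_num
    have h1 : Integrable (fun y : ℝ => y * Real.exp (-b * y ^ 2)) :=
      integrable_mul_exp_neg_mul_sq hb
    have h0 : Integrable (fun y : ℝ => Real.exp (-b * y ^ 2)) :=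
      integrable_exp_neg_mul_sq hb
    apply (((h2'.add (h1.const_mul (2*m))).add (h0.const_mul (m^2))).const_mul c).congr
    filter_upwards with y
    simp only [Pi.add_apply]
    ring
  have key2 := key.comp_sub_right m
  apply key2.congr
  filter_upwards with x
  rw [gaussianPDFReal]
  have hexp : -(x - m) ^ 2 / (2 * (v:ℝ)) = -b * (x - m)^2 := by
    rw [hbdef]; ring
  rw [hexp]
  ring_nf
  rw [hcdef]; ring_nf

lemma memLp_id_gaussianReal' (m : ℝ) (v : NNReal) :
    MemLp id 2 (gaussianReal m v) := by
  by_cases hv : v = 0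
  · rw [hv, gaussianReal_zero_var]
    have : (id : ℝ → ℝ) =ᵐ[Measure.dirac m] fun _ => m := by
      rw [Filter.EventuallyEq, ae_dirac_eq]
      exact Filter.eventually_pure.2 rfl
    exact (memLp_const m).ae_eq this.symm
  · rw [memLp_two_iff_integrable_sq aestronglyMeasurable_id,
      gaussianReal_of_var_ne_zero _ hv]
    rw [integrable_withDensity_iff (measurable_gaussianPDF _ _)
      (Filter.Eventually.of_forall fun x => ENNReal.ofReal_lt_top)]
    apply (integrable_sq_gaussianPDFReal' m v hv).congr
    filter_upwards with x
    rw [gaussianPDF, ENNReal.toReal_ofReal (gaussianPDFReal_nonneg _ _ _)]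
    rfl

noncomputable def gaussC : ℝ := ProbabilityTheory.variance id (gaussianReal 0 1)

lemma gaussC_pos : 0 < gaussC := by
  rcases lt_or_eq_of_le (ProbabilityTheory.variance_nonneg id (gaussianReal 0 1)) with h | h
  · exact h
  exfalso
  have hfin : evariance id (gaussianReal 0 1) < ⊤ :=
    (memLp_id_gaussianReal' 0 1).evariance_lt_top
  have hzero : evariance id (gaussianReal 0 1) = 0 := by
    have := h.symm
    rw [ProbabilityTheory.variance] at this
    exact (ENNReal.toReal_eq_zero_iff _).mp this |>.resolve_right hfin.ne
  rw [evariance_eq_zero_iff aemeasurable_id] at hzero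
  set mm := (gaussianReal 0 1)[id]
  have h1 : gaussianReal 0 1 {x : ℝ | ¬ (x = mm)} = 0 := hzero
  have hvol : (volume : Measure ℝ) {x : ℝ | ¬ (x = mm)} = 0 :=
    gaussianReal_absolutelyContinuous' 0 one_ne_zero h1
  have h2 : (volume : Measure ℝ) {x : ℝ | ¬ (x = mm)} = ⊤ := by
    have h3 : {x : ℝ | ¬ (x = mm)} = {mm}ᶜ := by ext x; simp
    rw [h3]
    by_contra hne
    have hsing : (volume : Measure ℝ) {mm} = 0 := Real.volume_singleton
    have htot := measure_add_measure_compl (μ := (volume : Measure ℝ))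
      (MeasurableSet.singleton mm)
    rw [hsing, zero_add, Real.volume_univ] at htot
    exact hne htot
  rw [h2] at hvol
  exact ENNReal.top_ne_zero hvol

lemma variance_id_gaussianReal' (v : NNReal) :
    ProbabilityTheory.variance id (gaussianReal 0 v) = gaussC * v := by
  have hmap : Measure.map (fun x : ℝ => Real.sqrt v * x) (gaussianReal 0 1)
      = gaussianReal 0 v := by
    rw [show (fun x : ℝ => Real.sqrt v * x) = (Real.sqrt v * ·) from rfl,
      gaussianReal_map_const_mul]
    congr 1
    · simp
    · ext
      push_cast
      simp [Real.sq_sqrt (v.2 : (0:ℝ) ≤ v)]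
  rw [← hmap, ProbabilityTheory.variance, ← evariance_map'' _ _ (by fun_prop),
    ← ProbabilityTheory.variance, variance_const_mul]
  have hs : Real.sqrt (v:ℝ) ^ 2 = (v:ℝ) := Real.sq_sqrt v.2
  rw [hs, mul_comm]
  rfl

lemma variance_of_gaussian_map {Ω : Type*} [MeasureSpace Ω] {X : Ω → ℝ} (hX : Measurable X)
    {v : NNReal} (h : Measure.map X MeasureTheory.volume = gaussianReal 0 v) :
    ProbabilityTheory.variance X MeasureTheory.volume = gaussC * v := by
  rw [ProbabilityTheory.variance, evariance_map'' _ _ hX, h,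
    ← ProbabilityTheory.variance, variance_id_gaussianReal']

lemma cst_ineq1 {x y : ℝ} (hx : 0 < x) (hy : 0 ≤ y) : 1 < 2 + x + y := by linarith

lemma cst_ineq2 {x y : ℝ} (hy : 0 ≤ y) : x ≤ 2 + x + y := by linarith

lemma cst_ineq3 {g k r x : ℝ} (hx : 0 < x) (hgk : 0 ≤ g * k) (hr : 0 ≤ r) :
    g * k * r ≤ 2 + x + g * k * (r + 1) := by nlinarith

end Aux

/-- Euclidean norm of a vector in `ℝ^N` given as a function `Fin N → ℝ`. -/
noncomputable def euclNorm {N : ℕ} (x : Fin N → ℝ) : ℝ :=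
  Real.sqrt (∑ j, x j ^ 2)

/-- `δ_s(t) = ∏_{j=1}^N min(s_j,t_j)/s_j`. -/
noncomputable def deltaPin {N : ℕ} (s t : Fin N → ℝ) : ℝ :=
  ∏ j, min (s j) (t j) / s j

/-- `B` is a one-dimensional `N`-parameter Brownian sheet. -/
def IsBrownianSheetR {Ω : Type*} [MeasureSpace Ω] (N : ℕ)
    (B : (Fin N → ℝ) → Ω → ℝ) : Prop :=
  (∀ t, Measurable (B t)) ∧
  ∀ (n : ℕ) (t : Fin n → (Fin N → ℝ)), (∀ k j, 0 ≤ t k j) →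
    ∀ c : Fin n → ℝ,
      Measure.map (fun ω => ∑ k, c k * B (t k) ω) MeasureTheory.volume =
        gaussianReal 0 (Real.toNNReal (∑ k, ∑ l, c k * c l *
          ∏ j, min (t k j) (t l j)))

set_option maxHeartbeats 1000000

/-- Two-sided bound on the variance of increments of the pinned sheet
`B_s(t) = B(t) − δ_s(t) B(s)` on a nonrandom upright box `I ⊂ (0,∞)^N`:
there is `c > 1` with `c⁻¹ ‖u−v‖ ≤ Var(B_s(u) − B_s(v)) ≤ c ‖u−v‖` for all
`s, u, v ∈ I`. -/
theorem pinned_sheet_variance_bounds {Ω : Type*} [MeasureSpace Ω]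
    [IsProbabilityMeasure (MeasureTheory.volume : Measure Ω)]
    {N : ℕ} (B : (Fin N → ℝ) → Ω → ℝ) (hB : IsBrownianSheetR N B)
    (a b : Fin N → ℝ) (ha : ∀ j, 0 < a j) (hab : ∀ j, a j < b j) :
    ∃ c : ℝ, 1 < c ∧ ∀ s u v : Fin N → ℝ,
      (∀ j, a j ≤ s j ∧ s j ≤ b j) →
      (∀ j, a j ≤ u j ∧ u j ≤ b j) →
      (∀ j, a j ≤ v j ∧ v j ≤ b j) →
      c⁻¹ * euclNorm (u - v) ≤
        ProbabilityTheory.variance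
          (fun ω => (B u ω - deltaPin s u * B s ω) -
            (B v ω - deltaPin s v * B s ω)) MeasureTheory.volume ∧
      ProbabilityTheory.variance
          (fun ω => (B u ω - deltaPin s u * B s ω) -
            (B v ω - deltaPin s v * B s ω)) MeasureTheory.volume ≤
        c * euclNorm (u - v) := by
  classical
  have hb0 : ∀ j, 0 < b j := fun j => lt_trans (ha j) (hab j)
  have hCpos := gaussC_pos
  set A0 := ∏ j, a j with hA0def
  set B0 := ∏ j, b j with hB0def
  have hA0 : 0 < A0 := prod_pos fun j _ => ha j
  have hB0 : 0 < B0 := prod_pos fun j _ => hb0 j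
  have hA0B0 : A0 ≤ B0 := prod_le_prod (fun j _ => (ha j).le) (fun j _ => (hab j).le)
  set Sb := ∑ j, b j with hSbdef
  have hSb : 0 ≤ Sb := sum_nonneg fun j _ => (hb0 j).le
  set κ := A0 / (1 + Sb) with hκdef
  have hκ : 0 < κ := div_pos hA0 (by linarith only [hSb])
  set K := B0 * (∑ j, (a j)⁻¹) + 1 with hKdef
  have hK : 0 < K := by
    have h0 : 0 ≤ ∑ j, (a j)⁻¹ := sum_nonneg fun j _ => (inv_nonneg).mpr (ha j).le
    have h1 : 0 ≤ B0 * ∑ j, (a j)⁻¹ := mul_nonneg hB0.le h0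
    rw [hKdef]; linarith only [h1]
  set ε := A0 / B0 with hεdef
  have hε0 : 0 < ε := div_pos hA0 hB0
  have hε1 : ε ≤ 1 := by
    rw [hεdef, div_le_one hB0]; exact hA0B0
  have hεB0 : ε * B0 = A0 := div_mul_cancel₀ _ hB0.ne'
  set cst := 2 + (gaussC * ε * κ)⁻¹ + gaussC * K * (Real.sqrt N + 1) with hcstdef
  have hinvpos : 0 < (gaussC * ε * κ)⁻¹ := by positivity
  have hlastpos : 0 ≤ gaussC * K * (Real.sqrt N + 1) := by positivity
  have hc1 : 1 < cst := by rw [hcstdef]; exact cst_ineq1 hinvpos hlastpos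
  refine ⟨cst, hc1, ?_⟩
  intro s u v hs hu hv
  have hu0 : ∀ j, 0 ≤ u j := fun j => le_trans (ha j).le (hu j).1
  have hv0 : ∀ j, 0 ≤ v j := fun j => le_trans (ha j).le (hv j).1
  have hs0 : ∀ j, 0 ≤ s j := fun j => le_trans (ha j).le (hs j).1
  -- named products
  set U := ∏ j, u j with hUdef
  set V := ∏ j, v j with hVdef
  set S := ∏ j, s j with hSdef
  set P := ∏ j, min (u j) (v j) with hPdef
  set Ap := ∏ j, min (u j) (s j) with hApdef
  set Cp := ∏ j, min (v j) (s j) with hCpdef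
  set T := ∏ j, min (min (u j) (v j)) (s j) with hTdef
  have hSpos : 0 < S := prod_pos fun j _ => lt_of_lt_of_le (ha j) (hs j).1
  set L := U + V - 2 * P with hLdef
  set Q := L - (Ap - Cp)^2 / S with hQdef
  set ℓ := ∑ j, |u j - v j| with hldef
  -- variance identity
  have hδu : deltaPin s u = Ap / S := by
    rw [deltaPin, prod_div_distrib]
    rw [show (∏ j, min (s j) (u j)) = ∏ j, min (u j) (s j) from
      prod_congr rfl fun j _ => min_comm _ _]
  have hδv : deltaPin s v = Cp / S := by
    rw [deltaPin, prod_div_distrib]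
    rw [show (∏ j, min (s j) (v j)) = ∏ j, min (v j) (s j) from
      prod_congr rfl fun j _ => min_comm _ _]
  have hvar : ProbabilityTheory.variance
      (fun ω => (B u ω - deltaPin s u * B s ω) -
        (B v ω - deltaPin s v * B s ω)) MeasureTheory.volume
      = gaussC * ((Real.toNNReal Q : NNReal) : ℝ) := by
    have ht : ∀ (k : Fin 3) j, 0 ≤ (![u, v, s]) k j := by
      intro k j
      fin_cases k
      · exact hu0 j
      · exact hv0 j
      · exact hs0 j
    have hmap := hB.2 3 ![u, v, s] ht ![1, -1, -(deltaPin s u - deltaPin s v)]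
    have hfun : (fun ω => (B u ω - deltaPin s u * B s ω) -
        (B v ω - deltaPin s v * B s ω))
        = fun ω => ∑ k, (![1, -1, -(deltaPin s u - deltaPin s v)]) k *
            B ((![u, v, s]) k) ω := by
      funext ω
      simp only [Fin.sum_univ_three, Matrix.cons_val_zero, Matrix.cons_val_one,
        Matrix.head_cons, Matrix.cons_val_two, Matrix.tail_cons]
      ring
    have hmeas : Measurable (fun ω => ∑ k, (![1, -1, -(deltaPin s u - deltaPin s v)]) k *
        B ((![u, v, s]) k) ω) :=
      Finset.measurable_sum _ fun k _ => (hB.1 _).const_mul _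
    have hσ : (∑ k, ∑ l, (![1, -1, -(deltaPin s u - deltaPin s v)]) k *
        (![1, -1, -(deltaPin s u - deltaPin s v)]) l *
          ∏ j, min ((![u, v, s]) k j) ((![u, v, s]) l j)) = Q := by
      simp only [Fin.sum_univ_three, Matrix.cons_val_zero, Matrix.cons_val_one,
        Matrix.head_cons, Matrix.cons_val_two, Matrix.tail_cons, min_self]
      rw [show (∏ j, min (v j) (u j)) = P from prod_congr rfl fun j _ => min_comm _ _,
        show (∏ j, min (s j) (u j)) = Ap from prod_congr rfl fun j _ => min_comm _ _,
        show (∏ j, min (s j) (v j)) = Cp from prod_congr rfl fun j _ => min_comm _ _,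
        ← hUdef, ← hVdef, ← hSdef, ← hPdef, ← hApdef, ← hCpdef, hδu, hδv, hQdef, hLdef]
      field_simp
      ring
    rw [hfun, variance_of_gaussian_map hmeas hmap, hσ]
  -- bounds on Q
  have hPU : P ≤ U := prod_le_prod (fun j _ => le_min (hu0 j) (hv0 j))
    (fun j _ => min_le_left _ _)
  have hPV : P ≤ V := prod_le_prod (fun j _ => le_min (hu0 j) (hv0 j))
    (fun j _ => min_le_right _ _)
  have hL0 : 0 ≤ L := by rw [hLdef]; linarith only [hPU, hPV, prod_nonneg fun j (_ : j ∈ univ) => le_min (hu0 j) (hv0 j)]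
  have hQup : Q ≤ L := by
    rw [hQdef]
    have : 0 ≤ (Ap - Cp)^2 / S := div_nonneg (sq_nonneg _) hSpos.le
    linarith only [this]
  have hTA : T ≤ Ap := prod_le_prod
    (fun j _ => le_min (le_min (hu0 j) (hv0 j)) (hs0 j))
    (fun j _ => min_le_min (min_le_left _ _) le_rfl)
  have hTC : T ≤ Cp := prod_le_prod
    (fun j _ => le_min (le_min (hu0 j) (hv0 j)) (hs0 j))
    (fun j _ => min_le_min (min_le_right _ _) le_rfl)
  have hA0T : A0 ≤ T := prod_le_prod (fun j _ => (ha j).le)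
    (fun j _ => le_min (le_min (hu j).1 (hv j).1) (hs j).1)
  have hSB0 : S ≤ B0 := prod_le_prod (fun j _ => hs0 j) (fun j _ => (hs j).2)
  have habs : |Ap - Cp| ≤ Ap + Cp - 2 * T := abs_le.mpr
    ⟨by linarith only [hTA], by linarith only [hTC]⟩
  have hDL : Ap + Cp - 2 * T ≤ L := by
    have hmono := symmdiff_mono' univ u v s (fun j => max (s j) (max (u j) (v j)))
      hu0 hv0 hs0 (fun j => le_max_left _ _) 1 1 1 zero_le_one le_rfl le_rfl
    rw [show (∏ j, min (u j) (max (s j) (max (u j) (v j)))) = U from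
        prod_congr rfl fun j _ => min_eq_left (le_max_of_le_right (le_max_left _ _)),
      show (∏ j, min (v j) (max (s j) (max (u j) (v j)))) = V from
        prod_congr rfl fun j _ => min_eq_left (le_max_of_le_right (le_max_right _ _)),
      show (∏ j, min (min (u j) (v j)) (max (s j) (max (u j) (v j)))) = P from
        prod_congr rfl fun j _ => min_eq_left (le_max_of_le_right
          (le_trans (min_le_left _ _) (le_max_left _ _)))] at hmono
    rw [hLdef]
    simp only [one_mul, ← hApdef, ← hCpdef, ← hTdef] at hmono
    linarith only [hmono]
  have hDS : Ap + Cp - 2 * T ≤ S - T := by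
    have hie := prod_incl_excl' univ (fun j => min (u j) (s j)) (fun j => min (v j) (s j)) s
      (fun j => le_min (hu0 j) (hs0 j)) (fun j => le_min (hv0 j) (hs0 j))
      (fun j => min_le_right _ _) (fun j => min_le_right _ _)
    rw [show (∏ j, min (min (u j) (s j)) (min (v j) (s j)))
        = T from prod_congr rfl fun j _ => by
          rw [min_min_min_comm, min_self]] at hie
    simp only [← hApdef, ← hCpdef, ← hSdef] at hie
    linarith only [hie, hTA, hTC]
  have hD0 : 0 ≤ Ap + Cp - 2 * T := by
    have hT0 : (0:ℝ) ≤ T := prod_nonneg fun j _ => le_min (le_min (hu0 j) (hv0 j)) (hs0 j)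
    linarith only [hTA, hTC, hT0]
  have hDS2 : S - T ≤ (1 - ε) * S := by
    have h1 : ε * S ≤ A0 := by
      calc ε * S ≤ ε * B0 := mul_le_mul_of_nonneg_left hSB0 hε0.le
        _ = A0 := hεB0
    have h2 : ε * S ≤ T := le_trans h1 hA0T
    have h3 : (1 - ε) * S = S - ε * S := by ring
    linarith only [h2, h3]
  have hG2 : (Ap - Cp)^2 ≤ L * ((1 - ε) * S) := by
    calc (Ap - Cp)^2 = |Ap - Cp|^2 := (sq_abs _).symm
      _ ≤ (Ap + Cp - 2 * T)^2 := by
          apply pow_le_pow_left₀ (abs_nonneg _) habs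
      _ = (Ap + Cp - 2 * T) * (Ap + Cp - 2 * T) := sq (Ap + Cp - 2*T) ▸ by ring
      _ ≤ L * ((1 - ε) * S) := mul_le_mul hDL (le_trans hDS hDS2) hD0 hL0
  have hQlow : ε * L ≤ Q := by
    rw [hQdef]
    have hdiv : (Ap - Cp)^2 / S ≤ (1 - ε) * L := by
      rw [div_le_iff₀ hSpos]
      calc (Ap - Cp)^2 ≤ L * ((1 - ε) * S) := hG2
        _ = (1 - ε) * L * S := by ring
    linarith only [hdiv]
  -- telescoping bounds for L
  have hp0 : ∀ i, 0 ≤ min (u i) (v i) := fun i => le_min (hu0 i) (hv0 i)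
  have herase_up : ∀ x : Fin N → ℝ, (∀ i, 0 ≤ x i) → (∀ i, x i ≤ b i) →
      ∀ j : Fin N, ∏ i ∈ univ.erase j, x i ≤ K := by
    intro x hx0 hxb j
    have h1 : ∏ i ∈ univ.erase j, x i ≤ ∏ i ∈ univ.erase j, b i :=
      prod_le_prod (fun i _ => hx0 i) (fun i _ => hxb i)
    have h2 : b j * ∏ i ∈ univ.erase j, b i = B0 := mul_prod_erase univ b (mem_univ j)
    have h3 : (a j)⁻¹ ≤ ∑ i, (a i)⁻¹ :=
      single_le_sum (fun i _ => (inv_nonneg).mpr (ha i).le) (mem_univ j)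
    have h4 : ∏ i ∈ univ.erase j, b i ≤ K := by
      rw [hKdef]
      have hbj := hb0 j
      have haj := ha j
      have habj := hab j
      have hprod0 : 0 ≤ ∏ i ∈ univ.erase j, b i :=
        prod_nonneg fun i _ => (hb0 i).le
      -- B0 * (a j)⁻¹ ≥ B0 / b j = ∏ erase
      have h5 : (∏ i ∈ univ.erase j, b i) * a j ≤ B0 := by
        calc (∏ i ∈ univ.erase j, b i) * a j ≤ (∏ i ∈ univ.erase j, b i) * b j :=
              mul_le_mul_of_nonneg_left habj.le hprod0
          _ = B0 := by rw [mul_comm]; exact h2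
      have h6 : (∏ i ∈ univ.erase j, b i) ≤ B0 * (a j)⁻¹ := by
        rw [le_mul_inv_iff₀ haj]
        exact h5
      calc (∏ i ∈ univ.erase j, b i) ≤ B0 * (a j)⁻¹ := h6
        _ ≤ B0 * ∑ i, (a i)⁻¹ := mul_le_mul_of_nonneg_left h3 hB0.le
        _ ≤ B0 * (∑ i, (a i)⁻¹) + 1 := by linarith only []
    exact le_trans h1 h4
  have herase_lo : ∀ x : Fin N → ℝ, (∀ i, a i ≤ x i) →
      ∀ j : Fin N, κ ≤ ∏ i ∈ univ.erase j, x i := by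
    intro x hax j
    have h1 : ∏ i ∈ univ.erase j, a i ≤ ∏ i ∈ univ.erase j, x i :=
      prod_le_prod (fun i _ => (ha i).le) (fun i _ => hax i)
    have h2 : a j * ∏ i ∈ univ.erase j, a i = A0 := mul_prod_erase univ a (mem_univ j)
    have h3 : b j ≤ Sb := single_le_sum (fun i _ => (hb0 i).le) (mem_univ j)
    have h4 : κ ≤ ∏ i ∈ univ.erase j, a i := by
      have haj := ha j
      have h5 : κ * a j ≤ A0 := by
        calc κ * a j ≤ κ * (1 + Sb) := by
              apply mul_le_mul_of_nonneg_left _ hκ.le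
              have h7 := hab j
              linarith only [h7, h3]
          _ = A0 := by rw [hκdef]; field_simp
      have h6 : κ * a j ≤ (∏ i ∈ univ.erase j, a i) * a j := by
        rw [← h2] at h5; linarith only [h5]
      exact le_of_mul_le_mul_right h6 haj
    exact le_trans h4 h1
  have hl_eq : ℓ = ∑ j, ((u j - min (u j) (v j)) + (v j - min (u j) (v j))) := by
    rw [hldef]
    exact sum_congr rfl fun j _ => abs_sub_eq_add_sub_min _ _
  have hLu : L ≤ K * ℓ := by
    have tU := prod_sub_prod_le' univ u (fun i => min (u i) (v i)) hp0
      (fun i => min_le_left _ _)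
    have tV := prod_sub_prod_le' univ v (fun i => min (u i) (v i)) hp0
      (fun i => min_le_right _ _)
    have bU : ∑ j, (u j - min (u j) (v j)) * ∏ i ∈ univ.erase j, u i
        ≤ ∑ j, (u j - min (u j) (v j)) * K := by
      apply sum_le_sum
      intro j _
      apply mul_le_mul_of_nonneg_left (herase_up u hu0 (fun i => (hu i).2) j)
      have h8 := min_le_left (u j) (v j); linarith only [h8]
    have bV : ∑ j, (v j - min (u j) (v j)) * ∏ i ∈ univ.erase j, v i
        ≤ ∑ j, (v j - min (u j) (v j)) * K := by
      apply sum_le_sum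
      intro j _
      apply mul_le_mul_of_nonneg_left (herase_up v hv0 (fun i => (hv i).2) j)
      have h8 := min_le_right (u j) (v j); linarith only [h8]
    have hsum : ∑ j, (u j - min (u j) (v j)) * K + ∑ j, (v j - min (u j) (v j)) * K
        = K * ℓ := by
      rw [hl_eq, mul_sum, ← sum_add_distrib]
      exact sum_congr rfl fun j _ => by ring
    simp only [← hUdef, ← hVdef, ← hPdef] at tU tV
    rw [hLdef]
    linarith only [tU, tV, bU, bV, hsum]
  have hLl : κ * ℓ ≤ L := by
    have tU := sum_le_prod_sub_prod' univ u (fun i => min (u i) (v i)) hp0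
      (fun i => min_le_left _ _)
    have tV := sum_le_prod_sub_prod' univ v (fun i => min (u i) (v i)) hp0
      (fun i => min_le_right _ _)
    have bU : ∑ j, (u j - min (u j) (v j)) * κ
        ≤ ∑ j, (u j - min (u j) (v j)) * ∏ i ∈ univ.erase j, min (u i) (v i) := by
      apply sum_le_sum
      intro j _
      apply mul_le_mul_of_nonneg_left
        (herase_lo (fun i => min (u i) (v i)) (fun i => le_min (hu i).1 (hv i).1) j)
      have h8 := min_le_left (u j) (v j); linarith only [h8]
    have bV : ∑ j, (v j - min (u j) (v j)) * κ
        ≤ ∑ j, (v j - min (u j) (v j)) * ∏ i ∈ univ.erase j, min (u i) (v i) := by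
      apply sum_le_sum
      intro j _
      apply mul_le_mul_of_nonneg_left
        (herase_lo (fun i => min (u i) (v i)) (fun i => le_min (hu i).1 (hv i).1) j)
      have h8 := min_le_right (u j) (v j); linarith only [h8]
    have hsum : ∑ j, (u j - min (u j) (v j)) * κ + ∑ j, (v j - min (u j) (v j)) * κ
        = κ * ℓ := by
      rw [hl_eq, mul_sum, ← sum_add_distrib]
      exact sum_congr rfl fun j _ => by ring
    simp only [← hUdef, ← hVdef, ← hPdef] at tU tV
    rw [hLdef]
    linarith only [tU, tV, bU, bV, hsum]
  -- norm comparisons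
  have hen_eq : euclNorm (u - v) = Real.sqrt (∑ j, (u j - v j)^2) := by
    simp only [euclNorm, Pi.sub_apply]
  have hen0 : 0 ≤ euclNorm (u - v) := Real.sqrt_nonneg _
  have hl0 : 0 ≤ ℓ := sum_nonneg fun j _ => abs_nonneg _
  have h_en_le : euclNorm (u - v) ≤ ℓ := by
    rw [hen_eq]
    have h1 : ∑ j, (u j - v j)^2 ≤ ℓ^2 := by
      rw [hldef]
      calc ∑ j, (u j - v j)^2 = ∑ j, |u j - v j|^2 := by
            exact sum_congr rfl fun j _ => (sq_abs _).symm
        _ ≤ (∑ j, |u j - v j|)^2 := sum_sq_le_sq_sum_of_nonneg fun j _ => abs_nonneg _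
    calc Real.sqrt (∑ j, (u j - v j)^2) ≤ Real.sqrt (ℓ^2) := Real.sqrt_le_sqrt h1
      _ = ℓ := Real.sqrt_sq hl0
  have h_l_le : ℓ ≤ Real.sqrt N * euclNorm (u - v) := by
    have h1 : ℓ^2 ≤ N * ∑ j, (u j - v j)^2 := by
      have h2 := sq_sum_le_card_mul_sum_sq (s := (univ : Finset (Fin N)))
        (f := fun j => |u j - v j|)
      simp only [card_univ, Fintype.card_fin, sq_abs] at h2
      rw [hldef]
      exact_mod_cast h2
    calc ℓ = Real.sqrt (ℓ^2) := (Real.sqrt_sq hl0).symm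
      _ ≤ Real.sqrt (N * ∑ j, (u j - v j)^2) := Real.sqrt_le_sqrt h1
      _ = Real.sqrt N * euclNorm (u - v) := by
          rw [Real.sqrt_mul (Nat.cast_nonneg N), hen_eq]
  -- finish
  have hQ0 : 0 ≤ Q := le_trans (mul_nonneg hε0.le hL0) hQlow
  have hcoe : ((Real.toNNReal Q : NNReal) : ℝ) = Q := Real.coe_toNNReal Q hQ0
  rw [hvar, hcoe]
  constructor
  · have hy : 0 < gaussC * ε * κ := by positivity
    have hcinv : cst⁻¹ ≤ gaussC * ε * κ := by
      have h1 : (gaussC * ε * κ)⁻¹ ≤ cst := by rw [hcstdef]; exact cst_ineq2 hlastpos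
      have h2 := inv_anti₀ (inv_pos.mpr hy) h1
      rwa [inv_inv] at h2
    calc cst⁻¹ * euclNorm (u - v) ≤ (gaussC * ε * κ) * euclNorm (u - v) :=
          mul_le_mul_of_nonneg_right hcinv hen0
      _ ≤ (gaussC * ε * κ) * ℓ := mul_le_mul_of_nonneg_left h_en_le hy.le
      _ = gaussC * (ε * (κ * ℓ)) := by ring
      _ ≤ gaussC * (ε * L) := by
          apply mul_le_mul_of_nonneg_left _ hCpos.le
          exact mul_le_mul_of_nonneg_left hLl hε0.le
      _ ≤ gaussC * Q := mul_le_mul_of_nonneg_left hQlow hCpos.le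
  · have hsN : 0 ≤ Real.sqrt N := Real.sqrt_nonneg _
    calc gaussC * Q ≤ gaussC * L := mul_le_mul_of_nonneg_left hQup hCpos.le
      _ ≤ gaussC * (K * ℓ) := mul_le_mul_of_nonneg_left hLu hCpos.le
      _ ≤ gaussC * (K * (Real.sqrt N * euclNorm (u - v))) := by
          apply mul_le_mul_of_nonneg_left _ hCpos.le
          exact mul_le_mul_of_nonneg_left h_l_le hK.le
      _ = (gaussC * K * Real.sqrt N) * euclNorm (u - v) := by ring
      _ ≤ cst * euclNorm (u - v) := by
          apply mul_le_mul_of_nonneg_right _ hen0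
          rw [hcstdef]
          exact cst_ineq3 hinvpos (mul_nonneg hCpos.le hK.le) hsN
end

section
/- Let u, v ∈ Θ where Θ = ∏_{j=1}^N [a_j,b_j] ⊂ (0,∞)^N. Then the N-dimensional Lebesgue measure of the symmetric difference [0,u] △ [0,v] of the boxes [0,u] = ∏_j [0,u_j] and [0,v] = ∏_j [0,v_j] is at least (min_j a_j)^{N−1} ∑_{k=1}^N |u_k − v_k|, and hence at least N^{−1/2} (min_j a_j)^{N−1} ‖u − v‖. -/
open Finset MeasureTheory

lemma aux_prod {ι : Type*} [DecidableEq ι] (s : Finset ι) (c : ℝ) (hc : 0 ≤ c)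
    (m u : ι → ℝ) (hcm : ∀ i, c ≤ m i) (hmu : ∀ i, m i ≤ u i) :
    c ^ s.card * ∑ i ∈ s, (u i - m i) ≤ c * (∏ i ∈ s, u i - ∏ i ∈ s, m i) := by
  induction s using Finset.induction with
  | empty => simp
  | insert _ _ hi =>
    rename_i i s ih
    have hcm' : ∀ i, (0:ℝ) ≤ m i := fun i => hc.trans (hcm i)
    have hcu' : ∀ i, (0:ℝ) ≤ u i := fun i => (hcm' i).trans (hmu i)
    have hD : (0:ℝ) ≤ ∏ j ∈ s, u j - ∏ j ∈ s, m j :=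
      sub_nonneg.2 (Finset.prod_le_prod (fun j _ => hcm' j) (fun j _ => hmu j))
    have hPm : c ^ s.card ≤ ∏ j ∈ s, m j := by
      rw [← Finset.prod_const]
      exact Finset.prod_le_prod (fun _ _ => hc) (fun j _ => hcm j)
    have hdi : (0:ℝ) ≤ u i - m i := sub_nonneg.2 (hmu i)
    have hci : c ≤ u i := (hcm i).trans (hmu i)
    rw [Finset.prod_insert hi, Finset.prod_insert hi, Finset.sum_insert hi,
      Finset.card_insert_of_notMem hi, pow_succ]
    have hpow : (0:ℝ) ≤ c ^ s.card := pow_nonneg hc _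
    nlinarith [mul_le_mul_of_nonneg_left ih hc, mul_le_mul_of_nonneg_right hci hD,
      mul_le_mul_of_nonneg_left hPm hdi, mul_le_mul_of_nonneg_left hpow hc]

/-- Lower bound on the volume of the symmetric difference of two boxes
`[0,u]` and `[0,v]` with `u, v` in an upright box `∏ [a_j,b_j] ⊂ (0,∞)^N`:
`meas([0,u] △ [0,v]) ≥ (min_j a_j)^{N−1} ∑_k |u_k − v_k|
  ≥ N^{−1/2} (min_j a_j)^{N−1} ‖u − v‖`. -/
theorem volume_symmDiff_boxes_lower_bound {N : ℕ} (hN : 0 < N)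
    (a b : Fin N → ℝ) (ha : ∀ j, 0 < a j) (hab : ∀ j, a j < b j)
    (u v : Fin N → ℝ)
    (hu : ∀ j, a j ≤ u j ∧ u j ≤ b j) (hv : ∀ j, a j ≤ v j ∧ v j ≤ b j) :
    ENNReal.ofReal ((⨅ j, a j) ^ (N - 1) * ∑ k, |u k - v k|) ≤
      MeasureTheory.volume
        ((Set.Icc 0 u \ Set.Icc 0 v) ∪ (Set.Icc 0 v \ Set.Icc 0 u)) ∧
    ENNReal.ofReal
        ((N : ℝ) ^ (-(1 : ℝ) / 2) * (⨅ j, a j) ^ (N - 1) * euclNorm (u - v)) ≤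
      MeasureTheory.volume
        ((Set.Icc 0 u \ Set.Icc 0 v) ∪ (Set.Icc 0 v \ Set.Icc 0 u)) := by
  haveI : Nonempty (Fin N) := ⟨⟨0, hN⟩⟩
  set c : ℝ := ⨅ j, a j with hc_def
  obtain ⟨j₀, hj₀⟩ := exists_eq_ciInf_of_finite (f := a)
  have hc0 : 0 < c := by rw [hc_def, ← hj₀]; exact ha j₀
  have hcle : ∀ j, c ≤ a j := fun j => ciInf_le (Finite.bddBelow_range a) j
  set m : Fin N → ℝ := fun j => min (u j) (v j) with hm_def
  have hcm : ∀ j, c ≤ m j := fun j =>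
    le_min ((hcle j).trans (hu j).1) ((hcle j).trans (hv j).1)
  have hmu : ∀ j, m j ≤ u j := fun j => min_le_left _ _
  have hmv : ∀ j, m j ≤ v j := fun j => min_le_right _ _
  have hm0 : ∀ j, (0:ℝ) ≤ m j := fun j => hc0.le.trans (hcm j)
  have hu0 : ∀ j, (0:ℝ) ≤ u j := fun j => (hm0 j).trans (hmu j)
  have hv0 : ∀ j, (0:ℝ) ≤ v j := fun j => (hm0 j).trans (hmv j)
  -- key real inequality
  have habs : ∀ k, |u k - v k| = (u k - m k) + (v k - m k) := by
    intro k
    rcases le_total (u k) (v k) with h | h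
    · show |u k - v k| = u k - (u k ⊓ v k) + (v k - (u k ⊓ v k))
      rw [inf_eq_left.2 h, abs_of_nonpos (by linarith)]; ring
    · show |u k - v k| = u k - (u k ⊓ v k) + (v k - (u k ⊓ v k))
      rw [inf_eq_right.2 h, abs_of_nonneg (by linarith)]; ring
  have hcard : (Finset.univ : Finset (Fin N)).card = N := by simp
  have h1 := aux_prod (Finset.univ : Finset (Fin N)) c hc0.le m u hcm hmu
  have h2 := aux_prod (Finset.univ : Finset (Fin N)) c hc0.le m v hcm hmv
  rw [hcard] at h1 h2
  have hNpow : c ^ N = c * c ^ (N - 1) := by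
    rw [← pow_succ']
    congr 1
    omega
  have key : c ^ (N - 1) * ∑ k, |u k - v k| ≤
      (∏ k, u k - ∏ k, m k) + (∏ k, v k - ∏ k, m k) := by
    have hsum : ∑ k, |u k - v k| = (∑ k, (u k - m k)) + (∑ k, (v k - m k)) := by
      rw [← Finset.sum_add_distrib]
      exact Finset.sum_congr rfl fun k _ => habs k
    have : c ^ N * ∑ k, |u k - v k| ≤
        c * ((∏ k, u k - ∏ k, m k) + (∏ k, v k - ∏ k, m k)) := by
      rw [hsum, mul_add, mul_add]; exact add_le_add h1 h2
    rw [hNpow, mul_assoc] at this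
    exact le_of_mul_le_mul_left this hc0
  -- products are nonneg and ordered
  have hPm_u : ∏ k, m k ≤ ∏ k, u k :=
    Finset.prod_le_prod (fun k _ => hm0 k) (fun k _ => hmu k)
  have hPm_v : ∏ k, m k ≤ ∏ k, v k :=
    Finset.prod_le_prod (fun k _ => hm0 k) (fun k _ => hmv k)
  have hPm0 : (0:ℝ) ≤ ∏ k, m k := Finset.prod_nonneg fun k _ => hm0 k
  -- volumes
  have hvol : ∀ (w : Fin N → ℝ), (∀ j, (0:ℝ) ≤ w j) →
      volume (Set.Icc (0 : Fin N → ℝ) w) = ENNReal.ofReal (∏ k, w k) := by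
    intro w hw
    rw [Real.volume_Icc_pi, ENNReal.ofReal_prod_of_nonneg (fun i _ => hw i)]
    simp
  have hIcc_inter : Set.Icc (0 : Fin N → ℝ) u ∩ Set.Icc 0 v = Set.Icc 0 m := by
    rw [Set.Icc_inter_Icc, sup_idem]
    rfl
  have hmeas_m : volume (Set.Icc (0 : Fin N → ℝ) m) = ENNReal.ofReal (∏ k, m k) :=
    hvol m hm0
  have hfin : volume (Set.Icc (0 : Fin N → ℝ) m) ≠ ⊤ := by
    rw [hmeas_m]; exact ENNReal.ofReal_ne_top
  have hdiff_u : volume (Set.Icc (0 : Fin N → ℝ) u \ Set.Icc 0 v) =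
      ENNReal.ofReal (∏ k, u k) - ENNReal.ofReal (∏ k, m k) := by
    rw [← Set.diff_self_inter, hIcc_inter,
      measure_diff (hIcc_inter ▸ Set.inter_subset_left)
        measurableSet_Icc.nullMeasurableSet hfin, hvol u hu0, hmeas_m]
  have hdiff_v : volume (Set.Icc (0 : Fin N → ℝ) v \ Set.Icc 0 u) =
      ENNReal.ofReal (∏ k, v k) - ENNReal.ofReal (∏ k, m k) := by
    rw [← Set.diff_self_inter, Set.inter_comm, hIcc_inter,
      measure_diff (hIcc_inter ▸ Set.inter_subset_right)
        measurableSet_Icc.nullMeasurableSet hfin, hvol v hv0, hmeas_m]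
  have hunion : volume ((Set.Icc (0 : Fin N → ℝ) u \ Set.Icc 0 v) ∪
      (Set.Icc 0 v \ Set.Icc 0 u)) =
      ENNReal.ofReal ((∏ k, u k - ∏ k, m k) + (∏ k, v k - ∏ k, m k)) := by
    rw [measure_union disjoint_sdiff_sdiff
        (measurableSet_Icc.diff measurableSet_Icc), hdiff_u, hdiff_v,
      ← ENNReal.ofReal_sub _ hPm0, ← ENNReal.ofReal_sub _ hPm0,
      ← ENNReal.ofReal_add (sub_nonneg.2 hPm_u) (sub_nonneg.2 hPm_v)]
  have first : ENNReal.ofReal (c ^ (N - 1) * ∑ k, |u k - v k|) ≤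
      volume ((Set.Icc (0 : Fin N → ℝ) u \ Set.Icc 0 v) ∪
        (Set.Icc 0 v \ Set.Icc 0 u)) := by
    rw [hunion]; exact ENNReal.ofReal_le_ofReal key
  refine ⟨first, le_trans (ENNReal.ofReal_le_ofReal ?_) first⟩
  -- second: N^{-1/2} * c^{N-1} * ‖u-v‖ ≤ c^{N-1} * ∑ |u-v|
  have hE0 : 0 ≤ euclNorm (u - v) := Real.sqrt_nonneg _
  have hS0 : 0 ≤ ∑ k, |u k - v k| := Finset.sum_nonneg fun k _ => abs_nonneg _
  have hE : euclNorm (u - v) ≤ ∑ k, |u k - v k| := by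
    have hsq : ∑ k, (u k - v k) ^ 2 ≤ (∑ k, |u k - v k|) ^ 2 := by
      calc ∑ k, (u k - v k) ^ 2 = ∑ k, |u k - v k| * |u k - v k| := by
            refine Finset.sum_congr rfl fun k _ => ?_
            rw [abs_mul_abs_self]; ring
        _ ≤ ∑ k, |u k - v k| * (∑ j, |u j - v j|) :=
            Finset.sum_le_sum fun k _ => mul_le_mul_of_nonneg_left
              (Finset.single_le_sum (f := fun j => |u j - v j|)
                (fun j _ => abs_nonneg _) (Finset.mem_univ k))
              (abs_nonneg _)
        _ = (∑ k, |u k - v k|) ^ 2 := by rw [← Finset.sum_mul]; ring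
    have : euclNorm (u - v) ≤ Real.sqrt ((∑ k, |u k - v k|) ^ 2) := by
      unfold euclNorm
      exact Real.sqrt_le_sqrt (by simpa [Pi.sub_apply] using hsq)
    rwa [Real.sqrt_sq hS0] at this
  have hT1 : (N : ℝ) ^ (-(1:ℝ) / 2) ≤ 1 := by
    apply Real.rpow_le_one_of_one_le_of_nonpos
    · exact_mod_cast hN
    · norm_num
  have hT0 : (0:ℝ) ≤ (N : ℝ) ^ (-(1:ℝ) / 2) :=
    Real.rpow_nonneg (Nat.cast_nonneg N) _
  calc (N : ℝ) ^ (-(1:ℝ) / 2) * c ^ (N - 1) * euclNorm (u - v)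
      ≤ 1 * c ^ (N - 1) * euclNorm (u - v) := by
        apply mul_le_mul_of_nonneg_right _ hE0
        exact mul_le_mul_of_nonneg_right hT1 (pow_nonneg hc0.le _)
    _ = c ^ (N - 1) * euclNorm (u - v) := by ring
    _ ≤ c ^ (N - 1) * ∑ k, |u k - v k| :=
        mul_le_mul_of_nonneg_left hE (pow_nonneg hc0.le _)
end
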